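/- arXiv:2501.13907 — 3 statements merged into one kernel-verified Lean document; each statement's English description precedes it below -/
import Mathlib

section
/- Let (H, η) be an extended strip decomposition of a graph G and let Q be an induced path in G between two distinct peripheral vertices. Then for every edge e = ab of H, |V(Q) ∩ η(e, a)| ≤ 1, and moreover V(Q) ⊆ ⋃_{e ∈ E(H)} η(e). -/
/-- Closed neighborhood of a set `S` in a graph `G`. -/
def closedNbhd {V : Type*} (G : SimpleGraph V) (S : Set V) : Set V :=
  S ∪ {v | ∃ s ∈ S, G.Adj s v}

/-- Open neighborhood of a set `S` in a graph `G`. -/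
def openNbhd {V : Type*} (G : SimpleGraph V) (S : Set V) : Set V :=
  {v | v ∉ S ∧ ∃ s ∈ S, G.Adj s v}

/-- Reachability inside the induced subgraph of `G` on the vertex set `T`. -/
def ReachIn {V : Type*} (G : SimpleGraph V) (T : Set V) : V → V → Prop :=
  Relation.ReflTransGen (fun a b => G.Adj a b ∧ a ∈ T ∧ b ∈ T)

/-- Total weight of a vertex set. -/
noncomputable def wsum {V : Type*} [Fintype V] (w : V → ℕ) (S : Set V) : ℕ :=
  ∑ v ∈ S.toFinite.toFinset, w v

/-- `l` is the vertex sequence of an induced path of `G`: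
nonempty, no repetitions, and two vertices of `l` are adjacent in `G`
iff they are consecutive in `l`. -/
def IsInducedPathList {V : Type*} (G : SimpleGraph V) (l : List V) : Prop :=
  l ≠ [] ∧ l.Nodup ∧
  ∀ (i j : ℕ) (hi : i < l.length) (hj : j < l.length),
    G.Adj (l.get ⟨i, hi⟩) (l.get ⟨j, hj⟩) ↔ (i + 1 = j ∨ j + 1 = i)

/-- Every connected component of the induced subgraph of `G` on `T`
has `w`-weight at most `b`. -/
def CompsSmall {V : Type*} [Fintype V] (G : SimpleGraph V) (w : V → ℕ)
    (T : Set V) (b : ℕ) : Prop :=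
  ∀ v ∈ T, wsum w {u | ReachIn G T v u} ≤ b

/-- `x`, `y`, `z` form a triangle in `H`. -/
def Tri {H' : Type*} (H : SimpleGraph H') (x y z : H') : Prop :=
  H.Adj x y ∧ H.Adj y z ∧ H.Adj x z

/-- An extended strip decomposition `(H, η)` of a graph `G`.
`ηv x` is `η(x)`, `ηe x y` is `η(xy)`, `ηi x y` is the interface `η(xy, x)`,
and `ηt x y z` is `η(xyz)`. -/
structure ESD {V : Type*} {H' : Type*} (G : SimpleGraph V) (H : SimpleGraph H') where
  ηv : H' → Set V
  ηe : H' → H' → Set V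
  ηi : H' → H' → Set V
  ηt : H' → H' → H' → Set V
  ηe_symm : ∀ x y, ηe x y = ηe y x
  ηt_symm12 : ∀ x y z, ηt x y z = ηt y x z
  ηt_symm23 : ∀ x y z, ηt x y z = ηt x z y
  ηe_empty : ∀ x y, ¬ H.Adj x y → ηe x y = ∅
  ηt_empty : ∀ x y z, ¬ Tri H x y z → ηt x y z = ∅
  ηi_sub : ∀ x y, ηi x y ⊆ ηe x y
  cover : ∀ v : V, (∃ x, v ∈ ηv x) ∨ (∃ x y, v ∈ ηe x y) ∨ (∃ x y z, v ∈ ηt x y z)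
  disj_vv : ∀ x y, x ≠ y → ηv x ∩ ηv y = ∅
  disj_ve : ∀ x y z, ηv x ∩ ηe y z = ∅
  disj_vt : ∀ x a b c, ηv x ∩ ηt a b c = ∅
  disj_ee : ∀ x y a b, ¬ (x = a ∧ y = b) → ¬ (x = b ∧ y = a) → ηe x y ∩ ηe a b = ∅
  disj_et : ∀ x y a b c, ηe x y ∩ ηt a b c = ∅
  disj_tt : ∀ a b c d e f, ({a, b, c} : Set H') ≠ ({d, e, f} : Set H') →
    ηt a b c ∩ ηt d e f = ∅
  complete : ∀ x y z, H.Adj x y → H.Adj x z → y ≠ z →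
    ∀ u ∈ ηi x y, ∀ v ∈ ηi x z, G.Adj u v
  edge_cond : ∀ u v : V, G.Adj u v →
    (∃ x, u ∈ ηv x ∧ v ∈ ηv x) ∨
    (∃ x y, u ∈ ηe x y ∧ v ∈ ηe x y) ∨
    (∃ x y z, u ∈ ηt x y z ∧ v ∈ ηt x y z) ∨
    (∃ x y z, H.Adj x y ∧ H.Adj x z ∧ y ≠ z ∧
      ((u ∈ ηi x y ∧ v ∈ ηi x z) ∨ (v ∈ ηi x y ∧ u ∈ ηi x z))) ∨
    (∃ x y, H.Adj x y ∧ ((u ∈ ηi x y ∧ v ∈ ηv x) ∨ (v ∈ ηi x y ∧ u ∈ ηv x))) ∨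
    (∃ x y z, Tri H x y z ∧
      ((u ∈ ηt x y z ∧ v ∈ ηi x y ∩ ηi y x) ∨ (v ∈ ηt x y z ∧ u ∈ ηi x y ∩ ηi y x)))

namespace ESD

variable {V : Type*} {H' : Type*} {G : SimpleGraph V} {H : SimpleGraph H'}

/-- A rigid extended strip decomposition: every edge of `H` has nonempty interfaces
and every isolated vertex `x` of `H` has `η(x) ≠ ∅`. -/
def IsRigid (D : ESD G H) : Prop :=
  (∀ x y, H.Adj x y → (D.ηi x y).Nonempty) ∧
  (∀ x, (∀ y, ¬ H.Adj x y) → (D.ηv x).Nonempty)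

/-- A vertex `z` of `G` is peripheral in `(H, η)`. -/
def Peripheral (D : ESD G H) (z : V) : Prop :=
  ∃ x y, H.Adj x y ∧ (∀ u, H.Adj x u → u = y) ∧ D.ηi x y = {z} ∧ D.ηv x = ∅

/-- The full edge particle `A_{pq}^{pq}`. -/
def fullEdge (D : ESD G H) (p q : H') : Set V :=
  D.ηv p ∪ D.ηv q ∪ D.ηe p q ∪ {v | ∃ r, v ∈ D.ηt p q r}

/-- Every particle of `D` has `w`-weight at most `b`. -/
def ParticlesSmall [Fintype V] (D : ESD G H) (w : V → ℕ) (b : ℕ) : Prop :=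
  (∀ x, wsum w (D.ηv x) ≤ b) ∧
  (∀ x y, H.Adj x y → wsum w (D.ηe x y \ (D.ηi x y ∪ D.ηi y x)) ≤ b) ∧
  (∀ x y, H.Adj x y → wsum w (D.ηv x ∪ (D.ηe x y \ D.ηi y x)) ≤ b) ∧
  (∀ x y, H.Adj x y → wsum w (D.fullEdge x y) ≤ b) ∧
  (∀ x y z, Tri H x y z → wsum w (D.ηt x y z) ≤ b)

end ESD

/-- The subdivided claw `S_{t,t,t}`: a center vertex and three arms of length `t`. -/
def StttRel (t : ℕ) : (Unit ⊕ Fin 3 × Fin t) → (Unit ⊕ Fin 3 × Fin t) → Prop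
  | Sum.inl _, Sum.inr p => p.2.val = 0
  | Sum.inr p, Sum.inr q => p.1 = q.1 ∧ p.2.val + 1 = q.2.val
  | _, _ => False

def Sttt (t : ℕ) : SimpleGraph (Unit ⊕ Fin 3 × Fin t) :=
  SimpleGraph.fromRel (StttRel t)

/-!
Walking along the path, one can pass from one part of `η` to another only through interfaces,
and two path vertices in different interfaces at the same vertex of `H` are adjacent.
Suppose `η(ab, a)` is met twice, at `p < q` with `q` minimal, and look at how the path entered
`η(ab)` before `p`. Through `η(a)`, `η(b)` or a triangle, it must have met an interface at `a` or
`b` earlier, which gives a chord or an earlier repetition. Through another interface at `b` (or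
at the start, `b` being the peripheral leaf), the end `b` is never used again, so after `q` the
path is trapped in `η(ab) ∪ η(a)` and the triangles through `ab`, and cannot reach its other
end. Finally, a path vertex in some `η(x)` or in a triangle part would force the path to enter
and leave that part through two interfaces at a common vertex of `H`, which are then equal or
adjacent, both impossible.
-/

theorem eq_or_eq_or_eq_or_eq_of_mem_triple {α : Type*} {x y z a b c d : α}
    (ha : a ∈ ({x, y, z} : Set α)) (hb : b ∈ ({x, y, z} : Set α)) (hc : c ∈ ({x, y, z} : Set α))
    (hd : d ∈ ({x, y, z} : Set α)) (hab : a ≠ b) (hcd : c ≠ d) :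
    a = c ∨ a = d ∨ b = c ∨ b = d := by
  simp only [Set.mem_insert_iff, Set.mem_singleton_iff] at ha hb hc hd
  grind

theorem Nat.exists_crossing {P : ℕ → Prop} {i j : ℕ} (hij : i ≤ j) (hi : ¬ P i) (hj : P j) :
    ∃ r, i ≤ r ∧ r < j ∧ ¬ P r ∧ P (r + 1) := by
  induction j, hij using Nat.le_induction with
  | base => exact absurd hj hi
  | succ j hij ih =>
    by_cases hPj : P j
    · obtain ⟨r, hir, hrj, hr, hr1⟩ := ih hPj
      exact ⟨r, hir, by omega, hr, hr1⟩
    · exact ⟨j, hij, by omega, hPj, hj⟩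

namespace ESD

variable {V H' : Type*} {G : SimpleGraph V} {H : SimpleGraph H'} (D : ESD G H)
  {u v : V} {a b c x y z : H'} {s : Set H'}

theorem adj_of_mem_ηe (h : v ∈ D.ηe a b) : H.Adj a b := by
  by_contra hab
  simp [D.ηe_empty a b hab] at h

theorem adj_of_mem_ηi (h : v ∈ D.ηi a b) : H.Adj a b :=
  D.adj_of_mem_ηe (D.ηi_sub a b h)

theorem eq_of_mem_ηv (hx : v ∈ D.ηv x) (hy : v ∈ D.ηv y) : x = y := by
  by_contra hxy
  exact Set.eq_empty_iff_forall_notMem.1 (D.disj_vv x y hxy) v ⟨hx, hy⟩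

theorem notMem_ηe_of_mem_ηv (hv : v ∈ D.ηv x) : v ∉ D.ηe a b := fun he =>
  Set.eq_empty_iff_forall_notMem.1 (D.disj_ve x a b) v ⟨hv, he⟩

theorem notMem_ηt_of_mem_ηv (hv : v ∈ D.ηv x) : v ∉ D.ηt a b c := fun ht =>
  Set.eq_empty_iff_forall_notMem.1 (D.disj_vt x a b c) v ⟨hv, ht⟩

theorem notMem_ηt_of_mem_ηe (he : v ∈ D.ηe a b) : v ∉ D.ηt x y z := fun ht =>
  Set.eq_empty_iff_forall_notMem.1 (D.disj_et a b x y z) v ⟨he, ht⟩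

theorem eq_or_eq_of_mem_ηe (hab : v ∈ D.ηe a b) (hxy : v ∈ D.ηe x y) :
    x = a ∧ y = b ∨ x = b ∧ y = a := by
  by_contra h
  rw [not_or] at h
  exact Set.eq_empty_iff_forall_notMem.1 (D.disj_ee x y a b h.1 h.2) v ⟨hxy, hab⟩

theorem triple_eq_of_mem_ηt (habc : v ∈ D.ηt a b c) (hxyz : v ∈ D.ηt x y z) :
    ({x, y, z} : Set H') = {a, b, c} := by
  by_contra h
  exact Set.eq_empty_iff_forall_notMem.1 (D.disj_tt x y z a b c h) v ⟨hxyz, habc⟩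

theorem adj_of_mem_ηi_of_ne (hu : u ∈ D.ηi x y) (hv : v ∈ D.ηi x z) (hyz : y ≠ z) :
    G.Adj u v :=
  D.complete x y z (D.adj_of_mem_ηi hu) (D.adj_of_mem_ηi hv) hyz u hu v hv

theorem adj_or_mem_of_mem_ηi (hu : u ∈ D.ηi x y) (hv : v ∈ D.ηi x z) :
    G.Adj u v ∨ v ∈ D.ηi x y := by
  by_cases hyz : y = z
  · exact Or.inr (hyz ▸ hv)
  · exact Or.inl (D.adj_of_mem_ηi_of_ne hu hv hyz)

/-- Triangle parts are indexed by the vertex set of the triangle, since `ηt` takes ordered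
triples. -/
def triPart (s : Set H') : Set V :=
  {v | ∃ x y z, v ∈ D.ηt x y z ∧ ({x, y, z} : Set H') = s}

theorem notMem_triPart_of_mem_ηe (he : v ∈ D.ηe a b) : v ∉ D.triPart s :=
  fun ⟨_, _, _, ht, _⟩ => D.notMem_ηt_of_mem_ηe he ht

theorem Peripheral.exists_mem_ηe {D : ESD G H} (h : D.Peripheral v) : ∃ x y, v ∈ D.ηe x y := by
  obtain ⟨x, y, -, -, hI, -⟩ := h
  exact ⟨x, y, D.ηi_sub x y (hI ▸ rfl)⟩

theorem Peripheral.notMem_ηv {D : ESD G H} (h : D.Peripheral v) : v ∉ D.ηv c := fun hc =>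
  have ⟨_, _, he⟩ := h.exists_mem_ηe
  D.notMem_ηe_of_mem_ηv hc he

theorem Peripheral.notMem_triPart {D : ESD G H} (h : D.Peripheral v) : v ∉ D.triPart s :=
  have ⟨_, _, he⟩ := h.exists_mem_ηe
  D.notMem_triPart_of_mem_ηe he

theorem exists_mem_ηi_of_adj_of_mem_ηv (hu : u ∈ D.ηv c) (huv : G.Adj u v)
    (hv : v ∉ D.ηv c) : ∃ d, v ∈ D.ηi c d := by
  rcases D.edge_cond u v huv with ⟨x, hux, hvx⟩ | ⟨x, y, hux, -⟩ | ⟨x, y, z, hux, -⟩ |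
    ⟨x, y, z, -, -, -, ⟨hux, -⟩ | ⟨-, hux⟩⟩ | ⟨x, y, -, ⟨hux, -⟩ | ⟨hvx, hux⟩⟩ |
    ⟨x, y, z, -, ⟨hux, -⟩ | ⟨-, hux, -⟩⟩
  · exact absurd (D.eq_of_mem_ηv hu hux ▸ hvx) hv
  · exact absurd hux (D.notMem_ηe_of_mem_ηv hu)
  · exact absurd hux (D.notMem_ηt_of_mem_ηv hu)
  · exact absurd (D.ηi_sub _ _ hux) (D.notMem_ηe_of_mem_ηv hu)
  · exact absurd (D.ηi_sub _ _ hux) (D.notMem_ηe_of_mem_ηv hu)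
  · exact absurd (D.ηi_sub _ _ hux) (D.notMem_ηe_of_mem_ηv hu)
  · exact ⟨y, D.eq_of_mem_ηv hux hu ▸ hvx⟩
  · exact absurd hux (D.notMem_ηt_of_mem_ηv hu)
  · exact absurd (D.ηi_sub _ _ hux) (D.notMem_ηe_of_mem_ηv hu)

theorem exists_mem_ηi_of_adj_of_mem_triPart (hu : u ∈ D.triPart s) (huv : G.Adj u v)
    (hv : v ∉ D.triPart s) : ∃ c ∈ s, ∃ d ∈ s, c ≠ d ∧ v ∈ D.ηi c d ∧ v ∈ D.ηi d c := by
  obtain ⟨a, b, c, hu, rfl⟩ := hu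
  rcases D.edge_cond u v huv with ⟨x, hux, -⟩ | ⟨x, y, hux, -⟩ | ⟨x, y, z, hux, hvx⟩ |
    ⟨x, y, z, -, -, -, ⟨hux, -⟩ | ⟨-, hux⟩⟩ | ⟨x, y, -, ⟨hux, -⟩ | ⟨-, hux⟩⟩ |
    ⟨x, y, z, htri, ⟨hux, hvx⟩ | ⟨-, hux, -⟩⟩
  · exact absurd hu (D.notMem_ηt_of_mem_ηv hux)
  · exact absurd hu (D.notMem_ηt_of_mem_ηe hux)
  · exact absurd ⟨x, y, z, hvx, D.triple_eq_of_mem_ηt hu hux⟩ hv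
  · exact absurd hu (D.notMem_ηt_of_mem_ηe (D.ηi_sub _ _ hux))
  · exact absurd hu (D.notMem_ηt_of_mem_ηe (D.ηi_sub _ _ hux))
  · exact absurd hu (D.notMem_ηt_of_mem_ηe (D.ηi_sub _ _ hux))
  · exact absurd hu (D.notMem_ηt_of_mem_ηv hux)
  · rw [← D.triple_eq_of_mem_ηt hu hux]
    exact ⟨x, by simp, y, by simp, htri.1.ne, hvx⟩
  · exact absurd hu (D.notMem_ηt_of_mem_ηe (D.ηi_sub _ _ hux))

theorem adj_of_mem_ηe_cases (hu : u ∈ D.ηe a b) (huv : G.Adj u v) (hv : v ∉ D.ηe a b) :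
    u ∈ D.ηi a b ∧ (v ∈ D.ηv a ∨ ∃ w ≠ b, v ∈ D.ηi a w) ∨
    u ∈ D.ηi b a ∧ (v ∈ D.ηv b ∨ ∃ w ≠ a, v ∈ D.ηi b w) ∨
    u ∈ D.ηi a b ∧ u ∈ D.ηi b a ∧ ∃ s, a ∈ s ∧ b ∈ s ∧ v ∈ D.triPart s := by
  have side : ∀ {x y}, u ∈ D.ηi x y → x = a ∧ y = b ∨ x = b ∧ y = a := fun h =>
    D.eq_or_eq_of_mem_ηe hu (D.ηi_sub _ _ h)
  rcases D.edge_cond u v huv with ⟨x, hux, -⟩ | ⟨x, y, hux, hvx⟩ | ⟨x, y, z, hux, -⟩ |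
    ⟨x, y, z, -, -, hyz, ⟨hux, hvx⟩ | ⟨hvx, hux⟩⟩ | ⟨x, y, -, ⟨hux, hvx⟩ | ⟨-, hux⟩⟩ |
    ⟨x, y, z, -, ⟨hux, -⟩ | ⟨hvx, hux⟩⟩
  · exact absurd hu (D.notMem_ηe_of_mem_ηv hux)
  · rcases D.eq_or_eq_of_mem_ηe hu hux with ⟨rfl, rfl⟩ | ⟨rfl, rfl⟩
    · exact absurd hvx hv
    · exact absurd (D.ηe_symm _ _ ▸ hvx) hv
  · exact absurd hux (D.notMem_ηt_of_mem_ηe hu)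
  · rcases side hux with ⟨rfl, rfl⟩ | ⟨rfl, rfl⟩
    · exact Or.inl ⟨hux, Or.inr ⟨z, hyz.symm, hvx⟩⟩
    · exact Or.inr (Or.inl ⟨hux, Or.inr ⟨z, hyz.symm, hvx⟩⟩)
  · rcases side hux with ⟨rfl, rfl⟩ | ⟨rfl, rfl⟩
    · exact Or.inl ⟨hux, Or.inr ⟨y, hyz, hvx⟩⟩
    · exact Or.inr (Or.inl ⟨hux, Or.inr ⟨y, hyz, hvx⟩⟩)
  · rcases side hux with ⟨rfl, rfl⟩ | ⟨rfl, rfl⟩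
    · exact Or.inl ⟨hux, Or.inl hvx⟩
    · exact Or.inr (Or.inl ⟨hux, Or.inl hvx⟩)
  · exact absurd hu (D.notMem_ηe_of_mem_ηv hux)
  · exact absurd hux (D.notMem_ηt_of_mem_ηe hu)
  · rcases side hux.1 with ⟨rfl, rfl⟩ | ⟨rfl, rfl⟩
    · exact Or.inr (Or.inr ⟨hux.1, hux.2, _, by simp, by simp, x, y, z, hvx, rfl⟩)
    · exact Or.inr (Or.inr ⟨hux.2, hux.1, _, by simp, by simp, x, y, z, hvx, rfl⟩)

theorem exists_mem_ηi_of_mem_ηi_of_mem_triangle {a b c d : H'} (ha : a ∈ ({x, y, z} : Set H'))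
    (hb : b ∈ ({x, y, z} : Set H')) (hc : c ∈ ({x, y, z} : Set H'))
    (hd : d ∈ ({x, y, z} : Set H')) (hab : a ≠ b) (hcd : c ≠ d)
    (hvcd : v ∈ D.ηi c d) (hvdc : v ∈ D.ηi d c) : (∃ w, v ∈ D.ηi a w) ∨ ∃ w, v ∈ D.ηi b w := by
  rcases eq_or_eq_or_eq_or_eq_of_mem_triple ha hb hc hd hab hcd with rfl | rfl | rfl | rfl
  exacts [Or.inl ⟨d, hvcd⟩, Or.inl ⟨c, hvdc⟩, Or.inr ⟨d, hvcd⟩, Or.inr ⟨c, hvdc⟩]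

def stripWithEnd (a b : H') : Set V :=
  D.ηe a b ∪ D.ηv a ∪ {v | ∃ s, a ∈ s ∧ b ∈ s ∧ v ∈ D.triPart s}

theorem mem_ηe_of_mem_stripWithEnd (hv : v ∈ D.stripWithEnd a b) (he : v ∈ D.ηe x y) :
    v ∈ D.ηe a b := by
  rcases hv with (hv | hv) | ⟨s, -, -, hv⟩
  · exact hv
  · exact absurd he (D.notMem_ηe_of_mem_ηv hv)
  · exact absurd hv (D.notMem_triPart_of_mem_ηe he)

theorem adj_of_mem_stripWithEnd_cases (hab : H.Adj a b) (hu : u ∈ D.stripWithEnd a b)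
    (huv : G.Adj u v) (hv : v ∉ D.stripWithEnd a b) :
    (∃ w ≠ b, v ∈ D.ηi a w) ∨ (∃ w, v ∈ D.ηi b w) ∨ u ∈ D.ηi b a := by
  simp only [stripWithEnd, Set.mem_union, Set.mem_ofPred_eq, not_or, not_exists, not_and] at hu hv
  obtain ⟨⟨hve, hvv⟩, hvt⟩ := hv
  rcases hu with (hu | hu) | ⟨s, has, hbs, hu⟩
  · rcases D.adj_of_mem_ηe_cases hu huv hve with ⟨-, hv | hv⟩ | ⟨hu, -⟩ | ⟨-, -, s, has, hbs, hv⟩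
    · exact absurd hv hvv
    · exact Or.inl hv
    · exact Or.inr (Or.inr hu)
    · exact absurd hv (hvt s has hbs)
  · obtain ⟨w, hw⟩ := D.exists_mem_ηi_of_adj_of_mem_ηv hu huv hvv
    obtain rfl | hwb := eq_or_ne w b
    · exact absurd (D.ηi_sub _ _ hw) hve
    · exact Or.inl ⟨w, hwb, hw⟩
  · obtain ⟨c, hc, d, hd, hcd, hvcd, hvdc⟩ :=
      D.exists_mem_ηi_of_adj_of_mem_triPart hu huv (hvt s has hbs)
    obtain ⟨x, y, z, -, rfl⟩ := hu
    rcases D.exists_mem_ηi_of_mem_ηi_of_mem_triangle has hbs hc hd hab.ne hcd hvcd hvdc with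
      ⟨w, hw⟩ | hw
    · obtain rfl | hwb := eq_or_ne w b
      · exact absurd (D.ηi_sub _ _ hw) hve
      · exact Or.inl ⟨w, hwb, hw⟩
    · exact Or.inr (Or.inl hw)

structure IsPeripheralPath (f : ℕ → V) (n : ℕ) : Prop where
  injOn : ∀ i j, i < n → j < n → f i = f j → i = j
  adj_iff : ∀ i j, i < n → j < n → (G.Adj (f i) (f j) ↔ i + 1 = j ∨ j + 1 = i)
  peripheral_first : D.Peripheral (f 0)
  peripheral_last : D.Peripheral (f (n - 1))

namespace IsPeripheralPath

variable {D} {f : ℕ → V} {n i j m p q t : ℕ} {d e : H'}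

theorem adj_succ (hP : D.IsPeripheralPath f n) (hi : i + 1 < n) : G.Adj (f i) (f (i + 1)) :=
  (hP.adj_iff i (i + 1) (by omega) hi).2 (Or.inl rfl)

theorem exists_entry {X : Set V} (hP : D.IsPeripheralPath f n) (h0 : f 0 ∉ X) (ht : f t ∈ X)
    (htn : t < n) : ∃ r < t, f r ∉ X ∧ f (r + 1) ∈ X ∧ G.Adj (f (r + 1)) (f r) := by
  obtain ⟨r, -, hrt, hr, hr1⟩ := Nat.exists_crossing (P := (f · ∈ X)) t.zero_le h0 ht
  exact ⟨r, hrt, hr, hr1, (hP.adj_succ (by omega)).symm⟩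

theorem exists_exit {X : Set V} (hP : D.IsPeripheralPath f n) (ht : f t ∈ X) (htn : t < n)
    (hlast : f (n - 1) ∉ X) :
    ∃ s, t ≤ s ∧ s + 1 < n ∧ f s ∈ X ∧ f (s + 1) ∉ X ∧ G.Adj (f s) (f (s + 1)) := by
  obtain ⟨s, hts, hsn, hs, hs1⟩ :=
    Nat.exists_crossing (P := (f · ∉ X)) (by omega : t ≤ n - 1) (not_not.2 ht) hlast
  exact ⟨s, hts, by omega, not_not.1 hs, hs1, hP.adj_succ (by omega)⟩

theorem exists_mem_ηi_before_of_mem_ηv (hP : D.IsPeripheralPath f n) (ht : f t ∈ D.ηv c)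
    (htn : t < n) : ∃ r < t, ∃ d, f r ∈ D.ηi c d := by
  obtain ⟨r, hrt, hr, hr1, hadj⟩ := hP.exists_entry hP.peripheral_first.notMem_ηv ht htn
  exact ⟨r, hrt, D.exists_mem_ηi_of_adj_of_mem_ηv hr1 hadj hr⟩

theorem exists_mem_ηi_after_of_mem_ηv (hP : D.IsPeripheralPath f n) (ht : f t ∈ D.ηv c)
    (htn : t < n) : ∃ s, t ≤ s ∧ s + 1 < n ∧ ∃ d, f (s + 1) ∈ D.ηi c d := by
  obtain ⟨s, hts, hsn, hs, hs1, hadj⟩ := hP.exists_exit ht htn hP.peripheral_last.notMem_ηv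
  exact ⟨s, hts, hsn, D.exists_mem_ηi_of_adj_of_mem_ηv hs hadj hs1⟩

theorem exists_mem_ηi_before_of_mem_triPart (hP : D.IsPeripheralPath f n)
    (ht : f t ∈ D.triPart s) (htn : t < n) :
    ∃ r < t, ∃ c ∈ s, ∃ d ∈ s, c ≠ d ∧ f r ∈ D.ηi c d ∧ f r ∈ D.ηi d c := by
  obtain ⟨r, hrt, hr, hr1, hadj⟩ :=
    hP.exists_entry hP.peripheral_first.notMem_triPart ht htn
  exact ⟨r, hrt, D.exists_mem_ηi_of_adj_of_mem_triPart hr1 hadj hr⟩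

theorem exists_mem_ηi_after_of_mem_triPart (hP : D.IsPeripheralPath f n)
    (ht : f t ∈ D.triPart s) (htn : t < n) :
    ∃ s', t ≤ s' ∧ s' + 1 < n ∧
      ∃ c ∈ s, ∃ d ∈ s, c ≠ d ∧ f (s' + 1) ∈ D.ηi c d ∧ f (s' + 1) ∈ D.ηi d c := by
  obtain ⟨s', hts, hsn, hs, hs1, hadj⟩ :=
    hP.exists_exit ht htn hP.peripheral_last.notMem_triPart
  exact ⟨s', hts, hsn, D.exists_mem_ηi_of_adj_of_mem_triPart hs hadj hs1⟩

/-- Once the path has used the end `b` of the strip `ab` for the last time, a second visit to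
`η(ab, a)` traps it on the side of `a`, which it cannot leave for the far peripheral end. -/
theorem false_of_trapped (hP : D.IsPeripheralPath f n) (hpq : p < q) (hqn : q < n)
    (hp : f p ∈ D.ηi a b) (hq : f q ∈ D.ηi a b)
    (hb : ∀ j c, q ≤ j → j < n → f j ∉ D.ηi b c) : False := by
  have hab := D.adj_of_mem_ηi hp
  have hqR : f q ∈ D.stripWithEnd a b := Or.inl (Or.inl (D.ηi_sub _ _ hq))
  by_cases hlast : f (n - 1) ∈ D.stripWithEnd a b
  · obtain ⟨x, y, -, -, hI, -⟩ := hP.peripheral_last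
    have hx : f (n - 1) ∈ D.ηi x y := hI ▸ rfl
    rcases D.eq_or_eq_of_mem_ηe (D.mem_ηe_of_mem_stripWithEnd hlast (D.ηi_sub _ _ hx))
      (D.ηi_sub _ _ hx) with ⟨rfl, rfl⟩ | ⟨rfl, rfl⟩
    · have := hP.injOn p (n - 1) (by omega) (by omega) (by rw [hI] at hp; exact hp)
      omega
    · exact hb (n - 1) _ (by omega) (by omega) hx
  obtain ⟨s, hqs, hsn, hs, hs1, hadj⟩ := hP.exists_exit hqR hqn hlast
  rcases D.adj_of_mem_stripWithEnd_cases hab hs hadj hs1 with ⟨w, hwb, hw⟩ | ⟨w, hw⟩ | hs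
  · have := (hP.adj_iff p (s + 1) (by omega) hsn).1 (D.adj_of_mem_ηi_of_ne hp hw hwb.symm)
    omega
  · exact hb (s + 1) w (by omega) hsn hw
  · exact hb s a hqs (by omega) hs

theorem notMem_ηi_of_first_mem_ηe (hP : D.IsPeripheralPath f n) (h0 : f 0 ∈ D.ηe a b)
    (hpq : p < q) (hqn : q < n) (hp : f p ∈ D.ηi a b) (hq : f q ∈ D.ηi a b) :
    ∀ j c, q ≤ j → j < n → f j ∉ D.ηi b c := by
  intro j c hqj hjn hj
  obtain ⟨x, y, -, hleaf, hI, -⟩ := hP.peripheral_first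
  have hx : f 0 ∈ D.ηi x y := hI ▸ rfl
  have first_of_mem : ∀ {i}, i < n → f i ∈ D.ηi x y → i = 0 := fun hi h =>
    hP.injOn _ 0 hi (by omega) (by rw [hI] at h; exact h)
  rcases D.eq_or_eq_of_mem_ηe h0 (D.ηi_sub _ _ hx) with ⟨rfl, rfl⟩ | ⟨rfl, rfl⟩
  · have := first_of_mem (by omega) hq
    omega
  · obtain rfl := hleaf c (D.adj_of_mem_ηi hj)
    have := first_of_mem hjn hj
    omega

theorem notMem_ηi_of_entry_through_end (hP : D.IsPeripheralPath f n) (hm : f m ∈ D.ηi b e)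
    (hea : e ≠ a) (hm1 : f (m + 1) ∈ D.ηi b a) (hmq : m + 2 ≤ q) (hqn : q < n)
    (hq : f q ∈ D.ηi a b) : ∀ j c, q ≤ j → j < n → f j ∉ D.ηi b c := by
  intro j c hqj hjn hj
  obtain rfl | hca := eq_or_ne c a
  · have := (hP.adj_iff m j (by omega) hjn).1 (D.adj_of_mem_ηi_of_ne hm hj hea)
    omega
  · have := (hP.adj_iff (m + 1) j (by omega) hjn).1 (D.adj_of_mem_ηi_of_ne hm1 hj hca.symm)
    obtain rfl : j = q := by omega
    rcases D.eq_or_eq_of_mem_ηe (D.ηi_sub _ _ hq) (D.ηi_sub _ _ hj) with ⟨h, -⟩ | ⟨-, h⟩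
    · exact (D.adj_of_mem_ηi hq).ne h.symm
    · exact hca h

theorem false_of_minimal_repeat (hP : D.IsPeripheralPath f n)
    (hmin : ∀ k < q, ∀ r < k, ∀ c d, f r ∈ D.ηi c d → f k ∈ D.ηi c d → False)
    (hpq : p < q) (hqn : q < n) (hp : f p ∈ D.ηi a b) (hq : f q ∈ D.ηi a b) : False := by
  by_cases h0 : f 0 ∈ D.ηe a b
  · exact hP.false_of_trapped hpq hqn hp hq (hP.notMem_ηi_of_first_mem_ηe h0 hpq hqn hp hq)
  obtain ⟨m, hmp, hm, hm1, hadj⟩ := hP.exists_entry h0 (D.ηi_sub _ _ hp) (by omega)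
  -- an earlier visit to an interface at the same end either repeats an interface before `q`
  -- or is a chord of the path
  have earlier : ∀ {k r e g h}, k < q → r + 1 < k → f k ∈ D.ηi e h → f r ∈ D.ηi e g → False := by
    intro k r e g h hkq hrk hk hr
    rcases D.adj_or_mem_of_mem_ηi hk hr with hkr | hr
    · have := (hP.adj_iff k r (by omega) (by omega)).1 hkr
      omega
    · exact hmin k hkq r (by omega) e h hr hk
  rcases D.adj_of_mem_ηe_cases hm1 hadj hm with
    ⟨-, hv | ⟨w, hwb, hv⟩⟩ | ⟨hu, hv | ⟨w, hwa, hv⟩⟩ | ⟨-, hu, s, has, hbs, hv⟩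
  · obtain ⟨r, hrm, g, hr⟩ := hP.exists_mem_ηi_before_of_mem_ηv hv (by omega)
    exact earlier hpq (by omega) hp hr
  · have := (hP.adj_iff m q (by omega) hqn).1 (D.adj_of_mem_ηi_of_ne hv hq hwb)
    omega
  · obtain ⟨r, hrm, g, hr⟩ := hP.exists_mem_ηi_before_of_mem_ηv hv (by omega)
    exact earlier (by omega) (by omega) hu hr
  · exact hP.false_of_trapped hpq hqn hp hq
      (hP.notMem_ηi_of_entry_through_end hv hwa hu (by omega) hqn hq)
  · obtain ⟨r, hrm, c, hc, d, hd, hcd, hrcd, hrdc⟩ :=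
      hP.exists_mem_ηi_before_of_mem_triPart hv (by omega)
    obtain ⟨x, y, z, -, rfl⟩ := hv
    rcases D.exists_mem_ηi_of_mem_ηi_of_mem_triangle has hbs hc hd (D.adj_of_mem_ηi hp).ne hcd
      hrcd hrdc with ⟨g, hr⟩ | ⟨g, hr⟩
    · exact earlier hpq (by omega) hp hr
    · exact earlier (by omega) (by omega) hu hr

theorem eq_of_mem_ηi (hP : D.IsPeripheralPath f n) (hi : i < n) (hj : j < n)
    (hfi : f i ∈ D.ηi a b) (hfj : f j ∈ D.ηi a b) : i = j := by
  have no_repeat : ∀ q, q < n → ∀ p < q, ∀ a b, f p ∈ D.ηi a b → f q ∈ D.ηi a b → False := by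
    intro q
    induction q using Nat.strong_induction_on with
    | _ q ih =>
      exact fun hqn p hpq a b hp hq => hP.false_of_minimal_repeat
        (fun k hk r hr c d => ih k hk (by omega) r hr c d) hpq hqn hp hq
  rcases lt_trichotomy i j with h | h | h
  · exact (no_repeat j hj i h a b hfi hfj).elim
  · exact h
  · exact (no_repeat i hi j h a b hfj hfi).elim

theorem false_of_mem_ηi_of_mem_ηi (hP : D.IsPeripheralPath f n) (hij : i + 1 < j) (hjn : j < n)
    (hi : f i ∈ D.ηi c d) (hj : f j ∈ D.ηi c e) : False := by
  rcases D.adj_or_mem_of_mem_ηi hi hj with hadj | hj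
  · have := (hP.adj_iff i j (by omega) hjn).1 hadj
    omega
  · have := hP.eq_of_mem_ηi (by omega) hjn hi hj
    omega

theorem exists_mem_ηe (hP : D.IsPeripheralPath f n) (ht : t < n) :
    ∃ a b, H.Adj a b ∧ f t ∈ D.ηe a b := by
  rcases D.cover (f t) with ⟨c, hc⟩ | ⟨a, b, he⟩ | ⟨x, y, z, hxyz⟩
  · obtain ⟨r, hrt, d, hr⟩ := hP.exists_mem_ηi_before_of_mem_ηv hc ht
    obtain ⟨s, hts, hsn, e, hs⟩ := hP.exists_mem_ηi_after_of_mem_ηv hc ht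
    exact (hP.false_of_mem_ηi_of_mem_ηi (by omega) hsn hr hs).elim
  · exact ⟨a, b, D.adj_of_mem_ηe he, he⟩
  · have hT : f t ∈ D.triPart {x, y, z} := ⟨x, y, z, hxyz, rfl⟩
    obtain ⟨r, hrt, c, hc, d, hd, hcd, hrcd, hrdc⟩ :=
      hP.exists_mem_ηi_before_of_mem_triPart hT ht
    obtain ⟨s, hts, hsn, c', hc', d', hd', hcd', hscd, hsdc⟩ :=
      hP.exists_mem_ηi_after_of_mem_triPart hT ht
    exfalso
    rcases D.exists_mem_ηi_of_mem_ηi_of_mem_triangle hc' hd' hc hd hcd' hcd hrcd hrdc with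
      ⟨g, hr⟩ | ⟨g, hr⟩
    · exact hP.false_of_mem_ηi_of_mem_ηi (by omega) hsn hr hscd
    · exact hP.false_of_mem_ηi_of_mem_ηi (by omega) hsn hr hsdc

end IsPeripheralPath

end ESD

theorem IsInducedPathList.isPeripheralPath {V H' : Type*} {G : SimpleGraph V}
    {H : SimpleGraph H'} {D : ESD G H} {l : List V} (hl : IsInducedPathList G l) (hne : l ≠ [])
    (hx : D.Peripheral (l.head hne)) (hy : D.Peripheral (l.getLast hne)) :
    D.IsPeripheralPath (fun i => l.getD i (l.head hne)) l.length where
  injOn i j hi hj hij := by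
    simp only [List.getD_eq_getElem _ _ hi, List.getD_eq_getElem _ _ hj] at hij
    exact (hl.2.1.getElem_inj_iff).1 hij
  adj_iff i j hi hj := by
    simpa only [List.getD_eq_getElem _ _ hi, List.getD_eq_getElem _ _ hj, List.get_eq_getElem] using
      hl.2.2 i j hi hj
  peripheral_first := by
    simpa only [List.getD_eq_getElem _ _ (List.length_pos_iff.2 hne), List.head_eq_getElem] using hx
  peripheral_last := by
    have hlast : l.length - 1 < l.length := by
      have := List.length_pos_iff.2 hne
      omega
    simpa only [List.getD_eq_getElem _ _ hlast, List.getLast_eq_getElem] using hy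

theorem path_inside_edges_general {V : Type*} {H' : Type*}
    (G : SimpleGraph V) (H : SimpleGraph H') (D : ESD G H)
    (l : List V) (hl : IsInducedPathList G l) (hne : l ≠ [])
    (hx : D.Peripheral (l.head hne)) (hy : D.Peripheral (l.getLast hne)) :
    (∀ a b : H', H.Adj a b → ∀ u ∈ l, ∀ v ∈ l,
      u ∈ D.ηi a b → v ∈ D.ηi a b → u = v) ∧
    (∀ u ∈ l, ∃ a b : H', H.Adj a b ∧ u ∈ D.ηe a b) := by
  have hP := hl.isPeripheralPath hne hx hy
  have index_of_mem : ∀ u ∈ l, ∃ i < l.length, l.getD i (l.head hne) = u := fun u hu => by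
    obtain ⟨i, hi, rfl⟩ := List.mem_iff_getElem.1 hu
    exact ⟨i, hi, List.getD_eq_getElem _ _ hi⟩
  refine ⟨fun a b _ u hu v hv hua hvb => ?_, fun u hu => ?_⟩
  · obtain ⟨i, hi, rfl⟩ := index_of_mem u hu
    obtain ⟨j, hj, rfl⟩ := index_of_mem v hv
    rw [hP.eq_of_mem_ηi hi hj hua hvb]
  · obtain ⟨i, hi, rfl⟩ := index_of_mem u hu
    exact hP.exists_mem_ηe hi

/-- an induced path between two distinct peripheral vertices meets each
interface in at most one vertex and is contained in the union of the edge sets. -/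
theorem path_inside_edges {V : Type*} {H' : Type*}
    (G : SimpleGraph V) (H : SimpleGraph H') (D : ESD G H)
    (l : List V) (hl : IsInducedPathList G l) (hne : l ≠ [])
    (hx : D.Peripheral (l.head hne)) (hy : D.Peripheral (l.getLast hne))
    (hxy : l.head hne ≠ l.getLast hne) :
    (∀ a b : H', H.Adj a b → ∀ u ∈ l, ∀ v ∈ l,
      u ∈ D.ηi a b → v ∈ D.ηi a b → u = v) ∧
    (∀ u ∈ l, ∃ a b : H', H.Adj a b ∧ u ∈ D.ηe a b) :=
  path_inside_edges_general G H D l hl hne hx hy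
end

section
/- Let (H, η) be an extended strip decomposition of a graph G, let z ∈ V(G) be peripheral in (H, η), and let Q be an induced path in G with endpoint z. Let pq be an edge of H with z ∉ η(pq) and let A = A_{pq}^{pq} be the corresponding full edge particle. If V(Q) ∩ N[A] ≠ ∅, then there exists an edge f ≠ pq of H and a vertex r ∈ {p, q} with r ∈ f such that η(f, r) ∩ V(Q) ≠ ∅. -/
/-!
The path starts at `z`, which lies in an edge part `η(xy) ≠ η(pq)` and hence outside
`A = A_{pq}^{pq}`. So if it meets `N[A]`, it has a vertex `v ∉ A` adjacent to a vertex of `A`: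
the meeting vertex itself, or the predecessor of the first path vertex in `A`. As `A` is a union
of parts of the decomposition, the adjacency conditions of `(H, η)` leave only one possibility
for such an edge: `v` lies in an interface `η(f, r)` with `r ∈ {p, q}` and `f ≠ pq`.
-/

namespace ESD

variable {V : Type*} {H' : Type*} {G : SimpleGraph V} {H : SimpleGraph H'} (D : ESD G H)
  {p q x y w : H'} {a : V}

lemma ηt_rotate (s t u : H') : D.ηt s t u = D.ηt u s t := by
  rw [D.ηt_symm23, D.ηt_symm12]

lemma exists_ηt_eq_of_mem (hpq : p ≠ q) (hp : p = x ∨ p = y ∨ p = w)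
    (hq : q = x ∨ q = y ∨ q = w) : ∃ r, D.ηt x y w = D.ηt p q r := by
  rcases hp with rfl | rfl | rfl <;> rcases hq with rfl | rfl | rfl
  all_goals first
    | exact absurd rfl hpq
    | exact ⟨_, rfl⟩
    | exact ⟨_, D.ηt_symm12 _ _ _⟩
    | exact ⟨_, D.ηt_symm23 _ _ _⟩
    | exact ⟨_, D.ηt_rotate _ _ _⟩
    | exact ⟨_, (D.ηt_rotate _ _ _).symm⟩
    | exact ⟨_, (D.ηt_rotate _ _ _).trans (D.ηt_symm23 _ _ _)⟩

lemma ηv_subset_fullEdge (hx : x = p ∨ x = q) : D.ηv x ⊆ D.fullEdge p q := by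
  rcases hx with rfl | rfl <;> intro v hv <;> simp [fullEdge, hv]

lemma ηe_subset_fullEdge : D.ηe p q ⊆ D.fullEdge p q := fun _ ha => by
  simp [fullEdge, ha]

lemma ηt_subset_fullEdge (r : H') : D.ηt p q r ⊆ D.fullEdge p q := fun _ ha =>
  Or.inr ⟨r, ha⟩

lemma eq_or_eq_of_mem_ηv_of_mem_fullEdge (hx : a ∈ D.ηv x) (hA : a ∈ D.fullEdge p q) :
    x = p ∨ x = q := by
  rcases hA with ((h | h) | h) | ⟨r, h⟩
  · exact .inl (by_contra fun hne => (D.disj_vv x p hne).subset ⟨hx, h⟩)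
  · exact .inr (by_contra fun hne => (D.disj_vv x q hne).subset ⟨hx, h⟩)
  · exact ((D.disj_ve x p q).subset ⟨hx, h⟩).elim
  · exact ((D.disj_vt x p q r).subset ⟨hx, h⟩).elim


lemma eq_or_eq_of_mem_ηe_of_mem_fullEdge (hx : a ∈ D.ηe x y) (hA : a ∈ D.fullEdge p q) :
    (x = p ∧ y = q) ∨ (x = q ∧ y = p) := by
  rcases hA with ((h | h) | h) | ⟨r, h⟩
  · exact ((D.disj_ve p x y).subset ⟨h, hx⟩).elim
  · exact ((D.disj_ve q x y).subset ⟨h, hx⟩).elim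
  · by_contra hne
    rw [not_or] at hne
    exact (D.disj_ee x y p q hne.1 hne.2).subset ⟨hx, h⟩
  · exact ((D.disj_et x y p q r).subset ⟨hx, h⟩).elim

lemma mem_of_mem_ηt_of_mem_fullEdge (hx : a ∈ D.ηt x y w) (hA : a ∈ D.fullEdge p q) :
    (p = x ∨ p = y ∨ p = w) ∧ (q = x ∨ q = y ∨ q = w) := by
  rcases hA with ((h | h) | h) | ⟨r, h⟩
  · exact ((D.disj_vt p x y w).subset ⟨h, hx⟩).elim
  · exact ((D.disj_vt q x y w).subset ⟨h, hx⟩).elim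
  · exact ((D.disj_et p q x y w).subset ⟨h, hx⟩).elim
  · have hxyw : ({x, y, w} : Set H') = {p, q, r} :=
      by_contra fun hne => (D.disj_tt x y w p q r hne).subset ⟨hx, h⟩
    have hp : p ∈ ({x, y, w} : Set H') := by simp [hxyw]
    have hq : q ∈ ({x, y, w} : Set H') := by simp [hxyw]
    exact ⟨hp, hq⟩

lemma eq_or_eq_of_mem_ηt_of_mem_fullEdge (hpq : p ≠ q) (hx : a ∈ D.ηt x y w)
    (hA : a ∈ D.fullEdge p q) : (x = p ∨ x = q) ∨ (y = p ∨ y = q) := by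
  obtain ⟨hp, hq⟩ := D.mem_of_mem_ηt_of_mem_fullEdge hx hA
  rcases hp with rfl | rfl | rfl <;> rcases hq with rfl | rfl | rfl <;> simp_all

lemma eq_or_eq_of_mem_ηi_of_mem_fullEdge (hx : a ∈ D.ηi x y) (hA : a ∈ D.fullEdge p q) :
    x = p ∨ x = q :=
  (D.eq_or_eq_of_mem_ηe_of_mem_fullEdge (D.ηi_sub x y hx) hA).imp And.left And.left

lemma mem_ηe_of_mem_ηe_of_mem_fullEdge (hx : a ∈ D.ηe x y) (hA : a ∈ D.fullEdge p q) :
    a ∈ D.ηe p q := by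
  rcases D.eq_or_eq_of_mem_ηe_of_mem_fullEdge hx hA with ⟨rfl, rfl⟩ | ⟨rfl, rfl⟩
  · exact hx
  · exact D.ηe_symm x y ▸ hx

lemma ηe_subset_fullEdge_of_mem (hx : a ∈ D.ηe x y) (hA : a ∈ D.fullEdge p q) :
    D.ηe x y ⊆ D.fullEdge p q := by
  rcases D.eq_or_eq_of_mem_ηe_of_mem_fullEdge hx hA with ⟨rfl, rfl⟩ | ⟨rfl, rfl⟩
  · exact D.ηe_subset_fullEdge
  · exact D.ηe_symm x y ▸ D.ηe_subset_fullEdge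

lemma ηt_subset_fullEdge_of_mem (hpq : p ≠ q) (hx : a ∈ D.ηt x y w)
    (hA : a ∈ D.fullEdge p q) : D.ηt x y w ⊆ D.fullEdge p q := by
  obtain ⟨hp, hq⟩ := D.mem_of_mem_ηt_of_mem_fullEdge hx hA
  obtain ⟨r, hr⟩ := D.exists_ηt_eq_of_mem hpq hp hq
  exact hr ▸ D.ηt_subset_fullEdge r

lemma exists_ηi_of_mem_ηi (hxy : H.Adj x y) (hx : x = p ∨ x = q) {u : V}
    (hu : u ∈ D.ηi x y) (huA : u ∉ D.fullEdge p q) :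
    ∃ r s : H', H.Adj r s ∧ (r = p ∨ r = q) ∧
      ¬ (r = p ∧ s = q) ∧ ¬ (r = q ∧ s = p) ∧ u ∈ D.ηi r s := by
  have hue := D.ηi_sub x y hu
  refine ⟨x, y, hxy, hx, ?_, ?_, hu⟩ <;> rintro ⟨rfl, rfl⟩ <;> apply huA
  · exact D.ηe_subset_fullEdge hue
  · exact D.ηe_subset_fullEdge (D.ηe_symm x y ▸ hue)

theorem exists_ηi_of_adj_fullEdge (hpq : p ≠ q) {u : V} (huA : u ∉ D.fullEdge p q)
    (haA : a ∈ D.fullEdge p q) (hua : G.Adj u a) :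
    ∃ r s : H', H.Adj r s ∧ (r = p ∨ r = q) ∧
      ¬ (r = p ∧ s = q) ∧ ¬ (r = q ∧ s = p) ∧ u ∈ D.ηi r s := by
  rcases D.edge_cond u a hua with ⟨x, hu, ha⟩ | ⟨x, y, hu, ha⟩ | ⟨x, y, w, hu, ha⟩ |
    ⟨x, y, w, hxy, hxw, -, ⟨hu, ha⟩ | ⟨ha, hu⟩⟩ | ⟨x, y, hxy, ⟨hu, ha⟩ | ⟨ha, hu⟩⟩ |
    ⟨x, y, w, ⟨hxy, -, -⟩, ⟨hu, ha⟩ | ⟨ha, hu⟩⟩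
  · exact (huA (D.ηv_subset_fullEdge (D.eq_or_eq_of_mem_ηv_of_mem_fullEdge ha haA) hu)).elim
  · exact (huA (D.ηe_subset_fullEdge_of_mem ha haA hu)).elim
  · exact (huA (D.ηt_subset_fullEdge_of_mem hpq ha haA hu)).elim
  · have hx := D.eq_or_eq_of_mem_ηi_of_mem_fullEdge ha haA
    exact D.exists_ηi_of_mem_ηi hxy hx hu huA
  · have hx := D.eq_or_eq_of_mem_ηi_of_mem_fullEdge ha haA
    exact D.exists_ηi_of_mem_ηi hxw hx hu huA
  · exact D.exists_ηi_of_mem_ηi hxy (D.eq_or_eq_of_mem_ηv_of_mem_fullEdge ha haA) hu huA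
  · have hx := D.eq_or_eq_of_mem_ηi_of_mem_fullEdge ha haA
    exact (huA (D.ηv_subset_fullEdge hx hu)).elim
  · exfalso
    rcases D.eq_or_eq_of_mem_ηe_of_mem_fullEdge (D.ηi_sub x y ha.1) haA with
      ⟨rfl, rfl⟩ | ⟨rfl, rfl⟩
    · exact huA (D.ηt_subset_fullEdge w hu)
    · exact huA (D.ηt_subset_fullEdge w (D.ηt_symm12 x y w ▸ hu))
  · rcases D.eq_or_eq_of_mem_ηt_of_mem_fullEdge hpq ha haA with hx | hy
    · exact D.exists_ηi_of_mem_ηi hxy hx hu.1 huA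
    · exact D.exists_ηi_of_mem_ηi hxy.symm hy hu.2 huA

end ESD

lemma List.IsChain.exists_rel_of_head_notMem {α : Type*} {R : α → α → Prop} {S : Set α}
    {b a : α} {l : List α} (hl : (b :: l).IsChain R) (hb : b ∉ S) (ha : a ∈ b :: l)
    (haS : a ∈ S) : ∃ u ∈ b :: l, u ∉ S ∧ ∃ v ∈ S, R u v := by
  induction l generalizing b with
  | nil => exact (hb (List.mem_singleton.mp ha ▸ haS)).elim
  | cons c l ih =>
    rw [List.isChain_cons_cons] at hl
    by_cases hc : c ∈ S
    · exact ⟨b, List.mem_cons_self, hb, c, hc, hl.1⟩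
    · have ha' : a ∈ c :: l := (List.mem_cons.mp ha).resolve_left (by rintro rfl; exact hb haS)
      obtain ⟨u, hu, huS, v, hvS, huv⟩ := ih hl.2 hc ha'
      exact ⟨u, List.mem_cons_of_mem b hu, huS, v, hvS, huv⟩

lemma IsInducedPathList.isChain {V : Type*} {G : SimpleGraph V} {l : List V}
    (hl : IsInducedPathList G l) : l.IsChain G.Adj :=
  List.isChain_iff_getElem.mpr fun i hi => (hl.2.2 i (i + 1) (by omega) hi).mpr (.inl rfl)

/-- an induced path starting at a peripheral vertex `z ∉ η(pq)` that
meets the closed neighborhood of the full edge particle `A_{pq}^{pq}` must meet an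
interface `η(f, r)` with `r ∈ {p, q}` and `f ≠ pq`. -/
theorem enter_particle {V : Type*} {H' : Type*}
    (G : SimpleGraph V) (H : SimpleGraph H') (D : ESD G H)
    (z : V) (hz : D.Peripheral z)
    (l : List V) (hl : IsInducedPathList G l) (hne : l ≠ []) (hhead : l.head hne = z)
    (p q : H') (hpq : H.Adj p q) (hznot : z ∉ D.ηe p q)
    (hmeet : ∃ u ∈ l, u ∈ closedNbhd G (D.fullEdge p q)) :
    ∃ r s : H', H.Adj r s ∧ (r = p ∨ r = q) ∧
      ¬ (r = p ∧ s = q) ∧ ¬ (r = q ∧ s = p) ∧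
      ∃ u ∈ l, u ∈ D.ηi r s := by
  obtain ⟨x, y, -, -, hxy, -⟩ := hz
  have hzA : z ∉ D.fullEdge p q := fun hzA =>
    hznot (D.mem_ηe_of_mem_ηe_of_mem_fullEdge (D.ηi_sub x y (hxy ▸ rfl)) hzA)
  obtain ⟨v, hv, hvA, a, haA, hva⟩ :
      ∃ v ∈ l, v ∉ D.fullEdge p q ∧ ∃ a ∈ D.fullEdge p q, G.Adj v a := by
    obtain ⟨u, hu, huN⟩ := hmeet
    by_cases huA : u ∈ D.fullEdge p q
    · obtain ⟨b, t, rfl⟩ := List.exists_cons_of_ne_nil hne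
      exact hl.isChain.exists_rel_of_head_notMem ((show b = z from hhead) ▸ hzA) hu huA
    · obtain ⟨a, haA, hau⟩ := huN.resolve_left huA
      exact ⟨u, hu, huA, a, haA, hau.symm⟩
  obtain ⟨r, s, hrs, hr, hne_pq, hne_qp, hvi⟩ := D.exists_ηi_of_adj_fullEdge hpq.ne hvA haA hva
  exact ⟨r, s, hrs, hr, hne_pq, hne_qp, v, hv, hvi⟩
end

section
/- Let G be a graph with nonnegative vertex weights, let Q = (q₀, …, q_k) be an induced path such that every connected component of G − N[V(Q)] has weight at most half of the total weight W of V(G), and suppose Q is minimal with this property (i.e., no proper subpath (q₀, …, q_j) with j < k has the property). If k ≥ 1, then G − N[V(Q) \ {q_k}] has a connected component C with weight strictly greater than W/2, and the last vertex q_k has a neighbor in C. -/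
section

variable {V : Type*} {G : SimpleGraph V}

lemma ReachIn.mem_of_mem {T : Set V} {v u : V} (h : ReachIn G T v u) (hv : v ∈ T) : u ∈ T := by
  induction h with
  | refl => exact hv
  | tail _ hstep _ => exact hstep.2.2

lemma ReachIn.mono_of_forall {T T' : Set V} {v : V} (hsub : ∀ u, ReachIn G T v u → u ∈ T')
    {u : V} (h : ReachIn G T v u) : ReachIn G T' v u := by
  induction h with
  | refl => exact .refl
  | tail hvb hstep ih => exact ih.tail ⟨hstep.1, hsub _ hvb, hsub _ (hvb.tail hstep)⟩

lemma wsum_mono [Fintype V] (w : V → ℕ) {S S' : Set V} (h : S ⊆ S') : wsum w S ≤ wsum w S' :=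
  Finset.sum_le_sum_of_subset (Set.Finite.toFinset_subset_toFinset.mpr h)

lemma mem_closedNbhd_insert {S : Set V} {x u : V} :
    u ∈ closedNbhd G (insert x S) ↔ u = x ∨ G.Adj x u ∨ u ∈ closedNbhd G S := by
  simp only [closedNbhd, Set.mem_union, Set.mem_insert_iff, Set.mem_ofPred_eq,
    exists_eq_or_imp]
  tauto

lemma mem_compl_closedNbhd_insert {S : Set V} {x u : V} (hx : x ∈ closedNbhd G S)
    (hu : u ∈ Set.univ \ closedNbhd G S) (hxu : ¬ G.Adj x u) :
    u ∈ Set.univ \ closedNbhd G (insert x S) := by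
  refine Set.mem_sdiff_of_mem trivial fun hmem => ?_
  rcases mem_closedNbhd_insert.mp hmem with rfl | hxu' | huS
  · exact hu.2 hx
  · exact hxu hxu'
  · exact hu.2 huS

lemma setOf_reachIn_subset_compl_closedNbhd_insert {S : Set V} {x v : V}
    (hx : x ∈ closedNbhd G S) (hv : v ∈ Set.univ \ closedNbhd G S)
    (hnadj : ∀ u, ReachIn G (Set.univ \ closedNbhd G S) v u → ¬ G.Adj x u) :
    {u | ReachIn G (Set.univ \ closedNbhd G S) v u} ⊆
      {u | ReachIn G (Set.univ \ closedNbhd G (insert x S)) v u} := fun _ h =>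
  h.mono_of_forall fun u hu => mem_compl_closedNbhd_insert hx (hu.mem_of_mem hv) (hnadj u hu)

lemma setOf_mem_eq_insert_getLast {l : List V} (hne : l ≠ []) :
    {u | u ∈ l} = insert (l.getLast hne) {u | u ∈ l.dropLast} := by
  ext u
  conv_lhs => rw [← List.dropLast_append_getLast hne]
  simp only [Set.mem_ofPred_eq, List.mem_append, List.mem_singleton, Set.mem_insert_iff]
  tauto

lemma IsInducedPathList.getLast_mem_closedNbhd_dropLast {l : List V}
    (hl : IsInducedPathList G l) (hne : l ≠ []) (hlen : 2 ≤ l.length) :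
    l.getLast hne ∈ closedNbhd G {u | u ∈ l.dropLast} := by
  have hpen : l.length - 2 < l.dropLast.length := by rw [List.length_dropLast]; omega
  refine Or.inr ⟨l.dropLast[l.length - 2], List.getElem_mem hpen, ?_⟩
  have hadj := (hl.2.2 (l.length - 2) (l.length - 1) (by omega) (by omega)).mpr (.inl (by omega))
  simpa [List.getElem_dropLast, List.getLast_eq_getElem] using hadj

end

/-- for a minimal induced path whose closed neighborhood's removal
leaves only components of weight at most half, removing the neighborhood of the path
minus its last vertex leaves a component of weight more than half, and the last
vertex has a neighbor in it. -/
theorem minimal_gyarfas_path_last_vertex {V : Type*} [Fintype V]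
    (G : SimpleGraph V) (w : V → ℕ) (l : List V) (hl : IsInducedPathList G l)
    (hne : l ≠ []) (hlen : 2 ≤ l.length)
    (hprop : CompsSmall G w (Set.univ \ closedNbhd G {v | v ∈ l}) (wsum w Set.univ / 2))
    (hmin : ∀ j : ℕ, j + 1 < l.length →
      ¬ CompsSmall G w (Set.univ \ closedNbhd G {v | v ∈ l.take (j + 1)})
        (wsum w Set.univ / 2)) :
    ∃ v ∈ Set.univ \ closedNbhd G {u | u ∈ l.dropLast},
      wsum w Set.univ <
        2 * wsum w {u | ReachIn G (Set.univ \ closedNbhd G {u | u ∈ l.dropLast}) v u} ∧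
      ∃ u, ReachIn G (Set.univ \ closedNbhd G {u | u ∈ l.dropLast}) v u ∧
        G.Adj (l.getLast hne) u := by
  have hdropLast : l.dropLast = l.take (l.length - 2 + 1) := by
    rw [List.dropLast_eq_take]; congr 1; omega
  have hbig := hmin (l.length - 2) (by omega)
  rw [← hdropLast] at hbig
  simp only [CompsSmall, not_forall, not_le] at hbig
  obtain ⟨v, hv, hbig⟩ := hbig
  refine ⟨v, hv, by omega, ?_⟩
  by_contra! hnadj
  have hlast := hl.getLast_mem_closedNbhd_dropLast hne hlen
  rw [setOf_mem_eq_insert_getLast hne] at hprop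
  have hsmall := hprop v (mem_compl_closedNbhd_insert hlast hv (hnadj v .refl))
  have hmono := wsum_mono w (setOf_reachIn_subset_compl_closedNbhd_insert hlast hv hnadj)
  omega
end
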